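/- arXiv:1904.02776 — 2 statements merged into one kernel-verified Lean document; each statement's English description precedes it below -/
import Mathlib

section
/- For every real β > 0, the infinite product Z^F(β) = ∏_{p prime} (1 + e^{-βp}) converges to a finite positive real number, the series ∑_{n=0}^∞ Q(n) e^{-nβ} converges, and the two are equal: ∏_{p prime} (1 + e^{-βp}) = ∑_{n=0}^∞ Q(n) e^{-nβ}. -/
/-!
With `x = e^{-β} ∈ [0, 1)`, each factor is `1 + x ^ p`. Expanding the product over the primes
gives the sum of `x ^ (∑ p ∈ s, p)` over all finite sets `s` of primes; this sum has nonnegative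
terms and finite partial sums bounded by `exp (∑ p, x ^ p)`, so it converges, and so does the
product. Grouping the finite sets `s` by `∑ p ∈ s, p = n` collects `Q n` copies of `x ^ n`.
The empty set contributes `1`, so the common value is at least `1`.
-/

/-- `Q n` is the number of partitions of `n` into distinct primes, i.e. the number of
finite sets of prime numbers whose elements sum to `n` (with `Q 0 = 1`). -/
noncomputable def Q (n : ℕ) : ℕ :=
  Nat.card {s : Finset ℕ // (∀ p ∈ s, Nat.Prime p) ∧ ∑ p ∈ s, p = n}

open Finset

section DistinctParts

variable (P : ℕ → Prop) {x : ℝ}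

theorem summable_pow_sum_finset_subtype (hx₀ : 0 ≤ x) (hx₁ : x < 1) :
    Summable fun s : Finset (Subtype P) => x ^ ∑ n ∈ s, (n : ℕ) := by
  simpa only [prod_pow_eq_pow_sum] using
    summable_finsetProd_of_summable_nonneg (fun n => pow_nonneg hx₀ _)
      ((summable_geometric_of_lt_one hx₀ hx₁).subtype P)

theorem hasProd_one_add_pow_subtype (hx₀ : 0 ≤ x) (hx₁ : x < 1) :
    HasProd (fun n : Subtype P => 1 + x ^ (n : ℕ))
      (∑' s : Finset (Subtype P), x ^ ∑ n ∈ s, (n : ℕ)) :=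
  hasProd_one_add_of_hasSum_prod <| by
    simpa only [prod_pow_eq_pow_sum] using (summable_pow_sum_finset_subtype P hx₀ hx₁).hasSum

theorem card_finset_subtype_sum_eq (m : ℕ) :
    Nat.card {s : Finset (Subtype P) // ∑ n ∈ s, (n : ℕ) = m} =
      Nat.card {s : Finset ℕ // (∀ p ∈ s, P p) ∧ ∑ p ∈ s, p = m} :=
  Nat.card_congr <|
    ((Equiv.finsetSubtypeComm P).subtypeEquiv fun s => by simp [sum_map]).trans
      (Equiv.subtypeSubtypeEquivSubtypeInter _ fun t : Finset ℕ => ∑ p ∈ t, p = m)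

theorem HasSum.card_mul_pow_of_finset_subtype {a : ℝ}
    (h : HasSum (fun s : Finset (Subtype P) => x ^ ∑ n ∈ s, (n : ℕ)) a) :
    HasSum (fun m => (Nat.card {s : Finset ℕ // (∀ p ∈ s, P p) ∧ ∑ p ∈ s, p = m} : ℝ) * x ^ m)
      a := by
  refine (h.tsum_fiberwise fun s => ∑ n ∈ s, (n : ℕ)).congr_fun fun m => ?_
  rw [tsum_congr fun s => by rw [show ∑ n ∈ (s : Finset (Subtype P)), (n : ℕ) = m from s.2],
    tsum_const, nsmul_eq_mul, ← card_finset_subtype_sum_eq P m]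
  rfl

end DistinctParts

/-- For every `β > 0`, the infinite product `∏_{p prime} (1 + e^{-βp})` converges to a
finite positive real number, the series `∑_{n ≥ 0} Q n * e^{-nβ}` converges, and the two
are equal. -/
theorem fermionic_partition_function_eq_generating_series {β : ℝ} (hβ : 0 < β) :
    Multipliable (fun p : Nat.Primes => 1 + Real.exp (-β * (p : ℕ))) ∧
    0 < ∏' p : Nat.Primes, (1 + Real.exp (-β * (p : ℕ))) ∧
    Summable (fun n : ℕ => (Q n : ℝ) * Real.exp (-(n : ℝ) * β)) ∧
    ∏' p : Nat.Primes, (1 + Real.exp (-β * (p : ℕ)))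
      = ∑' n : ℕ, (Q n : ℝ) * Real.exp (-(n : ℝ) * β) := by
  set x := Real.exp (-β)
  have hx₀ : 0 ≤ x := (Real.exp_pos _).le
  have hx₁ : x < 1 := Real.exp_lt_one_iff.mpr (neg_neg_of_pos hβ)
  have hexp (n : ℕ) : Real.exp (-β * n) = x ^ n := by rw [mul_comm, Real.exp_nat_mul]
  have hexp' (n : ℕ) : Real.exp (-(n : ℝ) * β) = x ^ n := by rw [← hexp, neg_mul_comm, mul_comm]
  simp only [hexp, hexp']
  have hsum := summable_pow_sum_finset_subtype Nat.Prime hx₀ hx₁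
  have hprod : HasProd (fun p : Nat.Primes => 1 + x ^ (p : ℕ)) _ :=
    hasProd_one_add_pow_subtype Nat.Prime hx₀ hx₁
  have hQ : HasSum (fun n => (Q n : ℝ) * x ^ n) _ := hsum.hasSum.card_mul_pow_of_finset_subtype
  have hone : 1 ≤ ∑' s : Finset (Subtype Nat.Prime), x ^ ∑ p ∈ s, (p : ℕ) := by
    simpa using hsum.le_tsum ∅ fun s _ => pow_nonneg hx₀ _
  exact ⟨hprod.multipliable, hprod.tprod_eq ▸ one_pos.trans_le hone, hQ.summable,
    hprod.tprod_eq.trans hQ.tsum_eq.symm⟩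
end

section
/- The function y ↦ ln(y) · ln(1 + e^{-y}) is integrable on (0, ∞), the series ∑_{k=1}^∞ (-1)^{k-1} (ln k)/k² converges, and ∫_0^∞ ln(y) ln(1 + e^{-y}) dy = -( γ π²/12 + ∑_{k=1}^∞ (-1)^{k-1} (ln k)/k² ), where γ is the Euler–Mascheroni constant. -/
/-!
Expanding `log (1 + e^{-y}) = ∑_{k ≥ 1} (-1)^{k-1} e^{-ky} / k` and integrating termwise reduces
everything to the Laplace transform `∫_0^∞ log y e^{-ky} dy = -(γ + log k) / k`, which the
substitution `t = k y` brings back to `∫_0^∞ log t e^{-t} dt = Γ'(1) = -γ`, and to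
`∑_{k ≥ 1} (-1)^{k-1} / k² = π² / 12`. Termwise integration is legitimate because
`∫_0^∞ |log y| e^{-ky} dy = O(log k / k)`, so the `L¹` norms of the terms are summable.
-/

open Real MeasureTheory Set

lemma abs_log_le_rpow_add_rpow_neg_div {t ε : ℝ} (ht : 0 < t) (hε : 0 < ε) :
    |log t| ≤ (t ^ ε + t ^ (-ε)) / ε := by
  have hpos : ∀ s : ℝ, 0 ≤ t ^ s / ε := fun s => div_nonneg (rpow_nonneg ht.le s) hε.le
  rw [add_div, abs_le]
  constructor
  · have := log_le_rpow_div (inv_nonneg.2 ht.le) hε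
    rw [log_inv, inv_rpow ht.le, ← rpow_neg ht.le] at this
    linarith [hpos ε]
  · linarith [log_le_rpow_div ht.le hε, hpos (-ε)]

lemma integrableOn_log_mul_exp_neg : IntegrableOn (fun t => log t * exp (-t)) (Ioi 0) := by
  have hmajor := ((GammaIntegral_convergent (s := 3 / 2) (by norm_num)).add
    (GammaIntegral_convergent (s := 1 / 2) (by norm_num))).const_mul 2
  refine hmajor.mono' ?_ ((ae_restrict_mem measurableSet_Ioi).mono fun t (ht : 0 < t) => ?_)
  · exact ((continuousOn_log.mono fun t ht => ne_of_gt ht).mul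
      (continuous_exp.comp continuous_neg).continuousOn).aestronglyMeasurable measurableSet_Ioi
  · have h := abs_log_le_rpow_add_rpow_neg_div ht one_half_pos
    rw [norm_mul, norm_eq_abs, norm_eq_abs, abs_exp]
    norm_num at h ⊢
    nlinarith [exp_pos (-t)]

lemma integral_log_mul_exp_neg :
    ∫ t in Ioi 0, log t * exp (-t) = -eulerMascheroniConstant := by
  have hGamma : Complex.Gamma =ᶠ[nhds 1] Complex.GammaIntegral := by
    filter_upwards [(isOpen_lt continuous_const Complex.continuous_re).mem_nhds
      (show (0 : ℝ) < (1 : ℂ).re by norm_num)] with s hs using Complex.Gamma_eq_integral hs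
  have h := ((Complex.hasDerivAt_GammaIntegral (by norm_num)).congr_of_eventuallyEq hGamma).unique
    Complex.hasDerivAt_Gamma_one
  simp only [sub_self, Complex.cpow_zero, one_mul] at h
  have h' : ((∫ t in Ioi 0, log t * exp (-t) : ℝ) : ℂ) = -eulerMascheroniConstant := by
    rw [← h, ← integral_complex_ofReal]
    push_cast
    rfl
  exact_mod_cast h'

section Rescaling

variable (φ : ℝ → ℝ) {c : ℝ}

lemma comp_log_mul_exp_neg_mul_eqOn (hc : 0 < c) :
    EqOn (fun y => φ (log y) * exp (-(c * y)))
      (fun y => (fun t => φ (log t - log c) * exp (-t)) (c * y)) (Ioi 0) := by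
  intro y (hy : 0 < y)
  simp only [log_mul hc.ne' hy.ne', add_sub_cancel_left]

lemma integrableOn_comp_log_mul_exp_neg_mul_iff (hc : 0 < c) :
    IntegrableOn (fun y => φ (log y) * exp (-(c * y))) (Ioi 0) ↔
      IntegrableOn (fun t => φ (log t - log c) * exp (-t)) (Ioi 0) := by
  rw [integrableOn_congr_fun (comp_log_mul_exp_neg_mul_eqOn φ hc) measurableSet_Ioi,
    integrableOn_Ioi_comp_mul_left_iff (fun t => φ (log t - log c) * exp (-t)) 0 hc, mul_zero]

lemma integral_comp_log_mul_exp_neg_mul (hc : 0 < c) :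
    ∫ y in Ioi 0, φ (log y) * exp (-(c * y)) =
      c⁻¹ * ∫ t in Ioi 0, φ (log t - log c) * exp (-t) := by
  rw [setIntegral_congr_fun measurableSet_Ioi (comp_log_mul_exp_neg_mul_eqOn φ hc),
    integral_comp_mul_left_Ioi (fun t => φ (log t - log c) * exp (-t)) 0 hc, mul_zero,
    smul_eq_mul]

end Rescaling

variable {c : ℝ}

lemma integrableOn_log_mul_exp_neg_mul (hc : 0 < c) :
    IntegrableOn (fun y => log y * exp (-(c * y))) (Ioi 0) := by
  refine (integrableOn_comp_log_mul_exp_neg_mul_iff (fun x => x) hc).2 ?_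
  simp only [sub_mul]
  exact integrableOn_log_mul_exp_neg.sub ((integrableOn_exp_neg_Ioi 0).const_mul (log c))

lemma integral_log_mul_exp_neg_mul (hc : 0 < c) :
    ∫ y in Ioi 0, log y * exp (-(c * y)) = -(eulerMascheroniConstant + log c) / c := by
  rw [integral_comp_log_mul_exp_neg_mul (fun x => x) hc]
  simp only [sub_mul]
  rw [integral_sub integrableOn_log_mul_exp_neg ((integrableOn_exp_neg_Ioi 0).const_mul (log c)),
    integral_const_mul, integral_log_mul_exp_neg, integral_exp_neg_Ioi_zero]
  ring

lemma integral_abs_log_mul_exp_neg_mul_le (hc : 0 < c) :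
    ∫ y in Ioi 0, |log y| * exp (-(c * y)) ≤
      ((∫ t in Ioi 0, |log t| * exp (-t)) + |log c|) / c := by
  have habs : IntegrableOn (fun t => |log t| * exp (-t)) (Ioi 0) := by
    have := integrableOn_log_mul_exp_neg.norm
    simp only [norm_mul, norm_eq_abs, abs_exp] at this
    exact this
  have hmajor : IntegrableOn (fun t => (|log t| + |log c|) * exp (-t)) (Ioi 0) := by
    simp only [add_mul]
    exact habs.add ((integrableOn_exp_neg_Ioi 0).const_mul _)
  rw [integral_comp_log_mul_exp_neg_mul (fun x => |x|) hc, inv_mul_eq_div]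
  gcongr
  calc ∫ t in Ioi 0, |log t - log c| * exp (-t)
      ≤ ∫ t in Ioi 0, (|log t| + |log c|) * exp (-t) :=
        integral_mono_of_nonneg (.of_forall fun t => by positivity) hmajor
          (.of_forall fun t => mul_le_mul_of_nonneg_right (abs_sub _ _) (exp_pos _).le)
    _ = (∫ t in Ioi 0, |log t| * exp (-t)) + |log c| := by
        simp only [add_mul]
        rw [integral_add habs ((integrableOn_exp_neg_Ioi 0).const_mul _), integral_const_mul,
          integral_exp_neg_Ioi_zero, mul_one]

lemma hasSum_neg_one_pow_div_succ_sq :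
    HasSum (fun j : ℕ => (-1 : ℝ) ^ j / (j + 1) ^ 2) (π ^ 2 / 12) := by
  -- the Fourier series of the Bernoulli polynomial `B₂` at `x = 1 / 2`
  have hcos (n : ℕ) : cos (2 * π * n * (1 / 2)) = (-1) ^ n := by
    rw [← cos_nat_mul_pi]; ring_nf
  have h := hasSum_one_div_nat_pow_mul_cos one_ne_zero (x := 1 / 2) (by norm_num)
  simp only [mul_one, hcos] at h
  rw [← bernoulliFun, bernoulliFun_two] at h
  have h1 := ((hasSum_nat_add_iff' 1).2 h).neg
  norm_num at h1
  rw [show (2 * π) ^ 2 / 2 / 2 * (1 / 12) = π ^ 2 / 12 by ring] at h1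
  refine h1.congr_fun fun j => ?_
  rw [pow_succ]
  ring

lemma summable_log_succ_div_succ_sq :
    Summable (fun j : ℕ => log (j + 1) / (j + 1) ^ 2) := by
  have hmajor : Summable (fun j : ℕ => 2 * ((j + 1 : ℝ) ^ (3 / 2 : ℝ))⁻¹) := by
    have := (summable_nat_add_iff 1).2 (summable_nat_rpow_inv.2 (by norm_num : (1 : ℝ) < 3 / 2))
    exact_mod_cast this.mul_left 2
  refine hmajor.of_nonneg_of_le (fun j => div_nonneg (log_nonneg (by simp)) (by positivity))
    fun j => ?_
  have hj : (0 : ℝ) < j + 1 := by positivity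
  have hsq : ((j + 1 : ℝ) ^ (3 / 2 : ℝ)) * (j + 1 : ℝ) ^ (1 / 2 : ℝ) = (j + 1) ^ 2 := by
    rw [← rpow_add hj]; norm_num
  calc log (j + 1) / (j + 1) ^ 2 ≤ (j + 1 : ℝ) ^ (1 / 2 : ℝ) / (1 / 2) / (j + 1) ^ 2 := by
        gcongr; exact log_le_rpow_div hj.le one_half_pos
    _ = 2 * ((j + 1 : ℝ) ^ (3 / 2 : ℝ))⁻¹ := by
        rw [← hsq]; field_simp

lemma hasSum_log_one_add_of_abs_lt_one {x : ℝ} (hx : |x| < 1) :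
    HasSum (fun n : ℕ => (-1) ^ n * x ^ (n + 1) / (n + 1)) (log (1 + x)) := by
  have h := (hasSum_pow_div_log_of_abs_lt_one (x := -x) (by rwa [abs_neg])).neg
  rw [neg_neg, sub_neg_eq_add] at h
  refine h.congr_fun fun n => ?_
  rw [neg_pow x, pow_succ (-1 : ℝ)]
  ring

lemma hasSum_log_one_add_exp_neg {y : ℝ} (hy : 0 < y) :
    HasSum (fun n : ℕ => (-1) ^ n * exp (-((n + 1) * y)) / (n + 1)) (log (1 + exp (-y))) := by
  have hx : |exp (-y)| < 1 := by rw [abs_exp, exp_lt_one_iff]; linarith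
  convert hasSum_log_one_add_of_abs_lt_one hx using 3 with n
  rw [← exp_nat_mul]
  push_cast
  ring_nf

lemma integrableOn_log_mul_log_one_add_exp_neg :
    IntegrableOn (fun y => log y * log (1 + exp (-y))) (Ioi 0) := by
  refine integrableOn_log_mul_exp_neg.norm.mono' ?_ (.of_forall fun y => ?_)
  · have hcont : Continuous fun y => log (1 + exp (-y)) :=
      (continuous_const.add (continuous_exp.comp continuous_neg)).log
        fun y => (add_pos one_pos (exp_pos _)).ne'
    exact ((continuousOn_log.mono fun t ht => ne_of_gt ht).mul
      hcont.continuousOn).aestronglyMeasurable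
      measurableSet_Ioi
  · have hlog_le : log (1 + exp (-y)) ≤ exp (-y) := by
      linarith [log_le_sub_one_of_pos (by positivity : 0 < 1 + exp (-y))]
    have hlog_nonneg : 0 ≤ log (1 + exp (-y)) := log_nonneg (by linarith [exp_pos (-y)])
    simp only [norm_mul, norm_eq_abs, abs_exp, abs_of_nonneg hlog_nonneg]
    gcongr

lemma summable_neg_one_pow_mul_log_succ_div_succ_sq :
    Summable (fun j : ℕ => (-1 : ℝ) ^ j * log (j + 1) / (j + 1) ^ 2) := by
  refine summable_log_succ_div_succ_sq.of_norm_bounded fun j => ?_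
  rw [mul_div_assoc, norm_mul, norm_pow, norm_neg, norm_one, one_pow, one_mul, norm_eq_abs,
    abs_of_nonneg (div_nonneg (log_nonneg (by simp)) (by positivity))]

lemma summable_integral_norm_neg_one_pow_div_succ_mul_log_mul_exp_neg :
    Summable fun j : ℕ =>
      ∫ y in Ioi 0, ‖(-1 : ℝ) ^ j / (j + 1) * (log y * exp (-((j + 1) * y)))‖ := by
  set A := ∫ t in Ioi 0, |log t| * exp (-t)
  have hmajor :
      Summable fun j : ℕ => A * (1 / ((j : ℝ) + 1) ^ 2) + log (j + 1) / (j + 1) ^ 2 := by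
    refine (Summable.mul_left A ?_).add summable_log_succ_div_succ_sq
    exact_mod_cast (summable_nat_add_iff 1).2 (summable_one_div_nat_pow.2 one_lt_two)
  refine hmajor.of_nonneg_of_le (fun j => integral_nonneg fun y => norm_nonneg _) fun j => ?_
  have hj : (0 : ℝ) < j + 1 := by positivity
  simp only [norm_mul, norm_div, norm_pow, norm_neg, norm_one, one_pow, norm_eq_abs, abs_exp,
    abs_of_pos hj]
  rw [integral_const_mul]
  calc 1 / ((j : ℝ) + 1) * ∫ y in Ioi 0, |log y| * exp (-((j + 1) * y))
      ≤ 1 / (j + 1) * ((A + |log (j + 1)|) / (j + 1)) := by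
        gcongr; exact integral_abs_log_mul_exp_neg_mul_le hj
    _ = _ := by
        rw [abs_of_nonneg (log_nonneg (by linarith))]
        field_simp

/-- The function `y ↦ log y * log (1 + e^{-y})` is integrable on `(0, ∞)`, the series
`∑_{k ≥ 1} (-1)^{k-1} (log k) / k²` converges, and
`∫_0^∞ log y * log (1 + e^{-y}) dy = -(γ π²/12 + ∑_{k ≥ 1} (-1)^{k-1} (log k)/k²)`,
where `γ` is the Euler–Mascheroni constant.  (The series is indexed here by
`k = j + 1` with `j : ℕ`.) -/
theorem integral_log_mul_log_one_add_exp_neg :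
    IntegrableOn (fun y : ℝ => Real.log y * Real.log (1 + Real.exp (-y))) (Set.Ioi 0) ∧
    Summable (fun j : ℕ => (-1 : ℝ) ^ j * Real.log (j + 1) / (j + 1) ^ 2) ∧
    ∫ y in Set.Ioi (0 : ℝ), Real.log y * Real.log (1 + Real.exp (-y))
      = -(Real.eulerMascheroniConstant * π ^ 2 / 12
          + ∑' j : ℕ, (-1 : ℝ) ^ j * Real.log (j + 1) / (j + 1) ^ 2) := by
  refine ⟨integrableOn_log_mul_log_one_add_exp_neg,
    summable_neg_one_pow_mul_log_succ_div_succ_sq, ?_⟩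
  set F : ℕ → ℝ → ℝ := fun j y =>
    (-1 : ℝ) ^ j / (j + 1) * (log y * exp (-((j + 1) * y)))
  have hF_int (j : ℕ) : IntegrableOn (F j) (Ioi 0) :=
    (integrableOn_log_mul_exp_neg_mul (by positivity)).const_mul _
  have hF_sum : EqOn (fun y => ∑' j, F j y) (fun y => log y * log (1 + exp (-y))) (Ioi 0) :=
    fun y hy => (((hasSum_log_one_add_exp_neg hy).mul_left (log y)).congr_fun
      fun j => by simp only [F]; ring).tsum_eq
  have hF_integral (j : ℕ) : ∫ y in Ioi 0, F j y = -(eulerMascheroniConstant *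
      ((-1 : ℝ) ^ j / (j + 1) ^ 2) + (-1) ^ j * log (j + 1) / (j + 1) ^ 2) := by
    rw [integral_const_mul, integral_log_mul_exp_neg_mul (by positivity)]
    field_simp
  have h := hasSum_integral_of_summable_integral_norm hF_int
    summable_integral_norm_neg_one_pow_div_succ_mul_log_mul_exp_neg
  rw [setIntegral_congr_fun measurableSet_Ioi hF_sum] at h
  refine h.unique ?_
  simp only [hF_integral]
  rw [mul_div_assoc eulerMascheroniConstant]
  exact ((hasSum_neg_one_pow_div_succ_sq.mul_left _).add
    summable_neg_one_pow_mul_log_succ_div_succ_sq.hasSum).neg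
end
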